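/- Let n ∈ ℕ, 0 < r < R and let w : ℝ² → ℝⁿ be continuously differentiable. Then the circle averages A_w(ρ) := (1/2π)∫₀^{2π} w(ρ cos θ, ρ sin θ) dθ satisfy |A_w(R) − A_w(r)| ≤ (2π)^{−1/2} (log(R/r))^{1/2} ( ∫_{𝔻_R∖𝔻_r} |Dw(x)|² dx )^{1/2}. -/

import Mathlib

open MeasureTheory Real

noncomputable section

abbrev E2 := EuclideanSpace ℝ (Fin 2)

/-- Square of the Hilbert–Schmidt (Frobenius) norm of the total derivative:
`|Dw(x)|² = Σᵢ |∂ᵢ w(x)|²`. -/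
def hsNormSq {n : ℕ} (w : E2 → EuclideanSpace ℝ (Fin n)) (x : E2) : ℝ :=
  ∑ i : Fin 2, ‖fderiv ℝ w x (EuclideanSpace.single i 1)‖ ^ 2

/-- The circle average `A_w(ρ) = (2π)⁻¹ ∫₀^{2π} w(ρ cos θ, ρ sin θ) dθ`. -/
def circAvg {n : ℕ} (w : E2 → EuclideanSpace ℝ (Fin n)) (ρ : ℝ) : EuclideanSpace ℝ (Fin n) :=
  (2 * π)⁻¹ • ∫ θ in (0 : ℝ)..(2 * π),
    w ((WithLp.equiv 2 (Fin 2 → ℝ)).symm ![ρ * Real.cos θ, ρ * Real.sin θ])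

/-!
With `e_θ = (cos θ, sin θ)`, along each ray `w(R e_θ) - w(r e_θ) = ∫_r^R Dw(ρ e_θ) e_θ dρ` and
`‖Dw(x) e_θ‖ ≤ |Dw(x)|`, so `|A_w(R) - A_w(r)| ≤ (2π)⁻¹ ∫∫ |Dw| dρ dθ` over `[r, R] × [-π, π]`.
Writing `|Dw| = (ρ^{1/2} |Dw|) · ρ^{-1/2}`, Cauchy–Schwarz bounds this double integral by
`(∫∫ |Dw|² ρ dρ dθ)^{1/2} (∫∫ ρ⁻¹ dρ dθ)^{1/2}`; the first factor is the integral over the annulus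
in polar coordinates and the second is `(2π log (R / r))^{1/2}`.
-/

open Set

theorem ContinuousLinearMap.norm_apply_le_norm_mul_sqrt_sum_sq
    {ι F : Type*} [Fintype ι] [DecidableEq ι] [NormedAddCommGroup F] [NormedSpace ℝ F]
    (L : EuclideanSpace ℝ ι →L[ℝ] F) (x : EuclideanSpace ℝ ι) :
    ‖L x‖ ≤ ‖x‖ * √(∑ i, ‖L (EuclideanSpace.single i 1)‖ ^ 2) := by
  have hx : x = ∑ i, x i • EuclideanSpace.single i (1 : ℝ) := by
    simpa using ((EuclideanSpace.basisFun ι ℝ).sum_repr x).symm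
  calc ‖L x‖ ≤ ∑ i, ‖x i‖ * ‖L (EuclideanSpace.single i 1)‖ := by
        conv_lhs => rw [hx]
        simp only [map_sum, map_smul]
        exact (norm_sum_le _ _).trans_eq (by simp only [norm_smul])
    _ ≤ √(∑ i, ‖x i‖ ^ 2) * √(∑ i, ‖L (EuclideanSpace.single i 1)‖ ^ 2) :=
        Real.sum_mul_le_sqrt_mul_sqrt _ _ _
    _ = _ := by rw [EuclideanSpace.norm_eq]

theorem MeasureTheory.integral_le_sqrt_mul_sqrt_of_pos {α : Type*} [MeasurableSpace α]
    {μ : Measure α} {f g : α → ℝ} (hf₀ : 0 ≤ᵐ[μ] f) (hg₀ : ∀ᵐ x ∂μ, 0 < g x)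
    (hf : AEMeasurable f μ) (hg : AEMeasurable g μ)
    (hfg : Integrable (fun x => g x * f x ^ 2) μ) (hg' : Integrable (fun x => (g x)⁻¹) μ) :
    ∫ x, f x ∂μ ≤ √(∫ x, g x * f x ^ 2 ∂μ) * √(∫ x, (g x)⁻¹ ∂μ) := by
  have h2 : ENNReal.ofReal 2 = 2 := by norm_num
  have hsq : ∀ᵐ x ∂μ, (√(g x) * f x) ^ 2 = g x * f x ^ 2 := by
    filter_upwards [hg₀] with x hx
    rw [mul_pow, Real.sq_sqrt hx.le]
  have hsq' : ∀ᵐ x ∂μ, (√(g x))⁻¹ ^ 2 = (g x)⁻¹ := by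
    filter_upwards [hg₀] with x hx
    rw [inv_pow, Real.sq_sqrt hx.le]
  have hmem : MemLp (fun x => √(g x) * f x) (ENNReal.ofReal 2) μ := by
    rw [h2]
    exact (memLp_two_iff_integrable_sq (hg.sqrt.mul hf).aestronglyMeasurable).2
      (hfg.congr (hsq.mono fun x hx => hx.symm))
  have hmem' : MemLp (fun x => (√(g x))⁻¹) (ENNReal.ofReal 2) μ := by
    rw [h2]
    exact (memLp_two_iff_integrable_sq hg.sqrt.inv.aestronglyMeasurable).2
      (hg'.congr (hsq'.mono fun x hx => hx.symm))
  have hholder := integral_mul_le_Lp_mul_Lq_of_nonneg Real.HolderConjugate.two_two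
    (hf₀.mono fun x hx => mul_nonneg (Real.sqrt_nonneg _) hx)
    (Filter.Eventually.of_forall fun x => by positivity) hmem hmem'
  simp only [Real.rpow_two, ← Real.sqrt_eq_rpow] at hholder
  calc ∫ x, f x ∂μ = ∫ x, √(g x) * f x * (√(g x))⁻¹ ∂μ := by
        refine integral_congr_ae (hg₀.mono fun x hx => ?_)
        field_simp [(Real.sqrt_pos.2 hx).ne']
    _ ≤ _ := hholder
    _ = _ := by rw [integral_congr_ae hsq, integral_congr_ae hsq']

theorem intervalIntegral_intervalIntegral_eq_setIntegral_Icc_prod {E : Type*}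
    [NormedAddCommGroup E] [NormedSpace ℝ E] {F : ℝ × ℝ → E} (hF : Continuous F)
    {a b c d : ℝ} (hab : a ≤ b) (hcd : c ≤ d) :
    ∫ y in c..d, ∫ x in a..b, F (x, y) = ∫ p in Icc a b ×ˢ Icc c d, F p := by
  have hint : IntegrableOn (fun z : ℝ × ℝ => F z.swap) (Icc c d ×ˢ Icc a b)
      (volume.prod volume) :=
    (hF.comp continuous_swap).continuousOn.integrableOn_compact
      (isCompact_Icc.prod isCompact_Icc)
  simp only [intervalIntegral.integral_of_le hab, intervalIntegral.integral_of_le hcd,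
    ← integral_Icc_eq_integral_Ioc]
  rw [Measure.volume_eq_prod, ← setIntegral_prod_swap, setIntegral_prod _ hint]
  rfl

theorem setIntegral_Icc_prod_inv_fst {r R c d : ℝ} (hr : 0 < r) (hrR : r ≤ R) (hcd : c ≤ d) :
    ∫ p in Icc r R ×ˢ Icc c d, p.1⁻¹ = Real.log (R / r) * (d - c) := by
  have hprod := setIntegral_prod_mul (μ := volume) (ν := volume) (fun ρ : ℝ => ρ⁻¹)
    (fun _ : ℝ => (1 : ℝ)) (Icc r R) (Icc c d)
  simp only [mul_one] at hprod
  rw [Measure.volume_eq_prod, hprod, integral_Icc_eq_integral_Ioc,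
    ← intervalIntegral.integral_of_le hrR, integral_inv_of_pos hr (hr.trans_le hrR),
    setIntegral_const, Real.volume_real_Icc_of_le hcd, smul_eq_mul, mul_one]

namespace CircleAverage

def polarPoint (ρ θ : ℝ) : E2 := (WithLp.equiv 2 (Fin 2 → ℝ)).symm ![ρ * cos θ, ρ * sin θ]

lemma polarPoint_eq_smul (ρ θ : ℝ) : polarPoint ρ θ = ρ • polarPoint 1 θ := by
  ext i; fin_cases i <;> simp [polarPoint]

lemma continuous_polarPoint : Continuous fun p : ℝ × ℝ => polarPoint p.1 p.2 := by
  refine (EuclideanSpace.equiv (Fin 2) ℝ).symm.continuous.comp (continuous_pi fun i => ?_)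
  fin_cases i <;>
    simp only [Fin.zero_eta, Fin.mk_one, Matrix.cons_val_zero, Matrix.cons_val_one] <;> fun_prop

lemma norm_polarPoint (ρ θ : ℝ) : ‖polarPoint ρ θ‖ = |ρ| := by
  rw [EuclideanSpace.norm_eq, ← Real.sqrt_sq_eq_abs, Fin.sum_univ_two]
  congr 1
  simp only [polarPoint, WithLp.equiv_symm_apply, Real.norm_eq_abs, sq_abs, Matrix.cons_val_zero,
    Matrix.cons_val_one]
  linear_combination ρ ^ 2 * sin_sq_add_cos_sq θ

lemma polarPoint_periodic (ρ : ℝ) : Function.Periodic (polarPoint ρ) (2 * π) := by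
  intro θ; simp [polarPoint]

lemma circAvg_eq_intervalIntegral_neg_pi_pi {n : ℕ} (w : E2 → EuclideanSpace ℝ (Fin n)) (ρ : ℝ) :
    circAvg w ρ = (2 * π)⁻¹ • ∫ θ in (-π)..π, w (polarPoint ρ θ) := by
  have := ((polarPoint_periodic ρ).comp w).intervalIntegral_add_eq (-π) 0
  show (2 * π)⁻¹ • ∫ θ in (0 : ℝ)..(2 * π), w (polarPoint ρ θ) = _
  congr 1
  simpa [Function.comp_def, show -π + 2 * π = π by ring] using this.symm

def toE2 : (ℝ × ℝ) ≃ᵐ E2 :=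
  MeasurableEquiv.finTwoArrow.symm.trans (MeasurableEquiv.toLp 2 (Fin 2 → ℝ))

lemma measurePreserving_toE2 : MeasurePreserving toE2 :=
  ((volume_preserving_finTwoArrow ℝ).symm _).trans
    (EuclideanSpace.volume_preserving_symm_measurableEquiv_toLp (Fin 2)).symm

lemma toE2_polarCoord_symm (p : ℝ × ℝ) : toE2 (polarCoord.symm p) = polarPoint p.1 p.2 := rfl

lemma polarCoord_target_inter_preimage_annulus {r R : ℝ} (hr : 0 < r) :
    polarCoord.target ∩ polarCoord.symm ⁻¹' (toE2 ⁻¹' (Metric.ball 0 R \ Metric.ball 0 r))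
      = Ico r R ×ˢ Ioo (-π) π := by
  ext ⟨ρ, θ⟩
  simp only [polarCoord_target, mem_inter_iff, mem_prod, mem_preimage, toE2_polarCoord_symm,
    mem_sdiff, mem_ball_zero_iff, norm_polarPoint, mem_Ioi, mem_Ico, not_lt]
  constructor
  · rintro ⟨⟨hρ, hθ⟩, hR, hr'⟩
    rw [abs_of_pos hρ] at hR hr'
    exact ⟨⟨hr', hR⟩, hθ⟩
  · rintro ⟨⟨hr', hR⟩, hθ⟩
    have hρ : 0 < ρ := hr.trans_le hr'
    rw [abs_of_pos hρ]
    exact ⟨⟨hρ, hθ⟩, hR, hr'⟩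

theorem setIntegral_polar_eq_setIntegral_annulus {E : Type*} [NormedAddCommGroup E]
    [NormedSpace ℝ E] (h : E2 → E) {r R : ℝ} (hr : 0 < r) :
    ∫ p in Icc r R ×ˢ Icc (-π) π, p.1 • h (polarPoint p.1 p.2)
      = ∫ x in Metric.ball 0 R \ Metric.ball 0 r, h x := by
  set A : Set E2 := Metric.ball 0 R \ Metric.ball 0 r
  have hA : MeasurableSet (polarCoord.symm ⁻¹' (toE2 ⁻¹' A)) :=
    (measurableSet_ball.diff measurableSet_ball).preimage
      (toE2.measurable.comp continuous_polarCoord_symm.measurable)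
  calc ∫ p in Icc r R ×ˢ Icc (-π) π, p.1 • h (polarPoint p.1 p.2)
      = ∫ p in polarCoord.target ∩ polarCoord.symm ⁻¹' (toE2 ⁻¹' A),
          p.1 • h (polarPoint p.1 p.2) := by
        rw [polarCoord_target_inter_preimage_annulus hr]
        exact setIntegral_congr_set
          (Measure.set_prod_ae_eq Ico_ae_eq_Icc.symm Ioo_ae_eq_Icc.symm)
    _ = ∫ p in polarCoord.target, p.1 • (A.indicator h) (toE2 (polarCoord.symm p)) := by
        rw [← setIntegral_indicator hA]
        refine setIntegral_congr_fun polarCoord.open_target.measurableSet fun p _ => ?_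
        rw [toE2_polarCoord_symm]
        by_cases hp : polarPoint p.1 p.2 ∈ A
        · rw [indicator_of_mem (show p ∈ _ from hp), indicator_of_mem hp]
        · rw [indicator_of_notMem (show p ∉ _ from hp), indicator_of_notMem hp, smul_zero]
    _ = ∫ q, A.indicator h (toE2 q) := integral_comp_polarCoord_symm (A.indicator h ∘ toE2)
    _ = ∫ x in A, h x := by
        rw [measurePreserving_toE2.integral_comp' (A.indicator h),
          integral_indicator (measurableSet_ball.diff measurableSet_ball)]

theorem integral_integral_sqrt_polarPoint_le {h : E2 → ℝ} (hh : Continuous h) (h₀ : ∀ x, 0 ≤ h x)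
    {r R : ℝ} (hr : 0 < r) (hrR : r ≤ R) :
    ∫ θ in (-π)..π, ∫ ρ in r..R, √(h (polarPoint ρ θ))
      ≤ √(∫ x in Metric.ball 0 R \ Metric.ball 0 r, h x) * √(2 * π * Real.log (R / r)) := by
  have hpi : -π ≤ π := by linarith [pi_pos]
  have hS : IsCompact (Icc r R ×ˢ Icc (-π) π) := isCompact_Icc.prod isCompact_Icc
  have hcont : Continuous fun p : ℝ × ℝ => h (polarPoint p.1 p.2) :=
    hh.comp continuous_polarPoint
  have hpos : ∀ᵐ p ∂(volume.restrict (Icc r R ×ˢ Icc (-π) π)), 0 < p.1 :=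
    ae_restrict_of_forall_mem hS.measurableSet fun p hp => hr.trans_le hp.1.1
  rw [intervalIntegral_intervalIntegral_eq_setIntegral_Icc_prod
    (F := fun p => √(h (polarPoint p.1 p.2))) hcont.sqrt hrR hpi]
  refine (integral_le_sqrt_mul_sqrt_of_pos (Filter.Eventually.of_forall fun _ => by positivity)
    hpos hcont.sqrt.aemeasurable measurable_fst.aemeasurable ?_ ?_).trans_eq ?_
  · exact (continuous_fst.mul (hcont.sqrt.pow 2)).continuousOn.integrableOn_compact hS
  · exact (continuousOn_fst.inv₀ fun p hp => (hr.trans_le hp.1.1).ne').integrableOn_compact hS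
  · simp_rw [Real.sq_sqrt (h₀ _), ← smul_eq_mul, setIntegral_polar_eq_setIntegral_annulus h hr,
      smul_eq_mul, setIntegral_Icc_prod_inv_fst hr hrR hpi]
    ring_nf

lemma hasDerivAt_polarPoint (ρ θ : ℝ) :
    HasDerivAt (fun ρ => polarPoint ρ θ) (polarPoint 1 θ) ρ := by
  rw [funext fun ρ => polarPoint_eq_smul ρ θ]
  simpa using (hasDerivAt_id ρ).smul_const (polarPoint 1 θ)

theorem sub_eq_integral_fderiv_polarPoint {F : Type*} [NormedAddCommGroup F] [NormedSpace ℝ F]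
    [CompleteSpace F] {u : E2 → F} (hu : ContDiff ℝ 1 u) (r R θ : ℝ) :
    u (polarPoint R θ) - u (polarPoint r θ)
      = ∫ ρ in r..R, fderiv ℝ u (polarPoint ρ θ) (polarPoint 1 θ) := by
  refine (intervalIntegral.integral_eq_sub_of_hasDerivAt (f := fun ρ => u (polarPoint ρ θ))
    (fun ρ _ => ?_) ?_).symm
  · exact (hu.differentiable one_ne_zero _).hasFDerivAt.comp_hasDerivAt ρ
      (hasDerivAt_polarPoint ρ θ)
  · refine Continuous.intervalIntegrable ?_ _ _
    exact ((hu.continuous_fderiv one_ne_zero).comp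
      (continuous_polarPoint.comp (continuous_id.prodMk continuous_const))).clm_apply
        continuous_const

section

variable {n : ℕ} {w : E2 → EuclideanSpace ℝ (Fin n)}

lemma hsNormSq_nonneg (x : E2) : 0 ≤ hsNormSq w x :=
  Finset.sum_nonneg fun _ _ => sq_nonneg _

lemma continuous_hsNormSq (hw : ContDiff ℝ 1 w) : Continuous (hsNormSq w) :=
  continuous_finsetSum _ fun _ _ =>
    ((hw.continuous_fderiv one_ne_zero).clm_apply continuous_const).norm.pow 2

lemma norm_fderiv_polarPoint_one_le (x : E2) (θ : ℝ) :
    ‖fderiv ℝ w x (polarPoint 1 θ)‖ ≤ √(hsNormSq w x) := by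
  refine ((fderiv ℝ w x).norm_apply_le_norm_mul_sqrt_sum_sq (polarPoint 1 θ)).trans_eq ?_
  rw [norm_polarPoint, abs_one, one_mul, hsNormSq]

lemma norm_sub_le_integral_sqrt_hsNormSq (hw : ContDiff ℝ 1 w) {r R : ℝ} (hrR : r ≤ R)
    (θ : ℝ) :
    ‖w (polarPoint R θ) - w (polarPoint r θ)‖
      ≤ ∫ ρ in r..R, √(hsNormSq w (polarPoint ρ θ)) := by
  rw [sub_eq_integral_fderiv_polarPoint hw]
  refine intervalIntegral.norm_integral_le_of_norm_le hrR
    (Filter.Eventually.of_forall fun ρ _ => norm_fderiv_polarPoint_one_le _ θ) ?_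
  exact ((continuous_hsNormSq hw).sqrt.comp
    (continuous_polarPoint.comp (continuous_id.prodMk continuous_const))).intervalIntegrable _ _

lemma norm_circAvg_sub_le (hw : ContDiff ℝ 1 w) {r R : ℝ} (hrR : r ≤ R) :
    ‖circAvg w R - circAvg w r‖
      ≤ (2 * π)⁻¹ * ∫ θ in (-π)..π, ∫ ρ in r..R, √(hsNormSq w (polarPoint ρ θ)) := by
  have hint (ρ : ℝ) : IntervalIntegrable (fun θ => w (polarPoint ρ θ)) volume (-π) π :=
    (hw.continuous.comp (continuous_polarPoint.comp
      (continuous_const.prodMk continuous_id))).intervalIntegrable _ _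
  rw [circAvg_eq_intervalIntegral_neg_pi_pi, circAvg_eq_intervalIntegral_neg_pi_pi, ← smul_sub,
    ← intervalIntegral.integral_sub (hint R) (hint r), norm_smul,
    Real.norm_of_nonneg (by positivity)]
  gcongr
  refine intervalIntegral.norm_integral_le_of_norm_le (by linarith [pi_pos])
    (Filter.Eventually.of_forall fun θ _ => norm_sub_le_integral_sqrt_hsNormSq hw hrR θ) ?_
  exact (intervalIntegral.continuous_parametric_intervalIntegral_of_continuous'
    (f := fun θ ρ => √(hsNormSq w (polarPoint ρ θ)))
    ((continuous_hsNormSq hw).sqrt.comp (continuous_polarPoint.comp continuous_swap)) r R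
    ).intervalIntegrable _ _

end

end CircleAverage

open CircleAverage

/-- For a `C¹` map `w : ℝ² → ℝⁿ` and `0 < r < R` the circle averages satisfy
`|A_w(R) − A_w(r)| ≤ (2π)^{-1/2} (log(R/r))^{1/2} (∫_{𝔻_R∖𝔻_r} |Dw|² dx)^{1/2}`. -/
theorem stmt9 :
    ∀ n : ℕ, ∀ r R : ℝ, 0 < r → r < R → ∀ w : E2 → EuclideanSpace ℝ (Fin n),
      ContDiff ℝ 1 w →
      ‖circAvg w R - circAvg w r‖ ≤
        Real.sqrt ((2 * π)⁻¹) * Real.sqrt (Real.log (R / r)) *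
          Real.sqrt (∫ x in Metric.ball (0 : E2) R \ Metric.ball 0 r, hsNormSq w x) := by
  intro n r R hr hrR w hw
  set K := ∫ x in Metric.ball (0 : E2) R \ Metric.ball 0 r, hsNormSq w x
  calc ‖circAvg w R - circAvg w r‖
      ≤ (2 * π)⁻¹ * ∫ θ in (-π)..π, ∫ ρ in r..R, √(hsNormSq w (polarPoint ρ θ)) :=
        norm_circAvg_sub_le hw hrR.le
    _ ≤ (2 * π)⁻¹ * (√K * √(2 * π * Real.log (R / r))) := by
        gcongr
        exact integral_integral_sqrt_polarPoint_le (continuous_hsNormSq hw) hsNormSq_nonneg hr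
          hrR.le
    _ = √((2 * π)⁻¹) * √(Real.log (R / r)) * √K := by
        have : 0 < √(2 * π) := by positivity
        rw [Real.sqrt_mul (by positivity), Real.sqrt_inv]
        field_simp
        rw [Real.sq_sqrt (by positivity)]
        ring
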